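/- The GHZ game cannot be won classically without communication on the promise inputs: for all functions a, b, c : {0,1} → {0,1} there exist x, y, z ∈ {0,1} with x ⊕ y ⊕ z = 0 such that a(x) ⊕ b(y) ⊕ c(z) ≠ x ∨ y ∨ z. -/
import Mathlib

/-- **The GHZ game cannot be won classically without communication on the promise inputs**:
for all functions `a b c : {0,1} → {0,1}` there exist `x, y, z` with `x ⊕ y ⊕ z = 0` and
`a(x) ⊕ b(y) ⊕ c(z) ≠ x ∨ y ∨ z`. -/
theorem ghz_classically_hard (a b c : Bool → Bool) :
    ∃ x y z : Bool, Bool.xor x (Bool.xor y z) = false ∧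
      Bool.xor (a x) (Bool.xor (b y) (c z)) ≠ (x || y || z) := by
  by_contra h
  push_neg at h
  have h1 := h false false false rfl
  have h2 := h false true true rfl
  have h3 := h true false true rfl
  have h4 := h true true false rfl
  revert h1 h2 h3 h4
  cases a false <;> cases a true <;> cases b false <;> cases b true <;> cases c false <;> cases c true <;> simp
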